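/- arXiv:0705.1806 — 7 statements merged into one kernel-verified Lean document; each statement's English description precedes it below -/
import Mathlib

section
/- For every rooted tree T with n ≥ 2 nodes and every k with 1 ≤ k ≤ n−2, the number c(T,k) of transversals of size k satisfies c(T,k) ≥ binom(n−1,k−1). -/
open Finset

/-- A rooted tree on node set `Fin n`, given by a parent function.
The root is its own parent, and iterating the parent function from any
node eventually reaches the root. -/
structure RTree (n : ℕ) where
  root : Fin n
  parent : Fin n → Fin n
  parent_root : parent root = root
  reaches_root : ∀ v, ∃ k, parent^[k] v = root

namespace RTree

variable {n : ℕ}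

/-- `y` is an ancestor of `v` (possibly `y = v`): `y` lies on the
root-to-`v` path. -/
def Ancestor (T : RTree n) (y v : Fin n) : Prop :=
  ∃ k, T.parent^[k] v = y

/-- `u` is a child of `v`. -/
def IsChild (T : RTree n) (u v : Fin n) : Prop :=
  u ≠ T.root ∧ T.parent u = v

/-- A node is internal if it has at least one child. -/
def IsInternal (T : RTree n) (v : Fin n) : Prop :=
  ∃ u, T.IsChild u v

/-- A leaf is a node with no children. -/
def IsLeaf (T : RTree n) (v : Fin n) : Prop :=
  ¬ T.IsInternal v

open scoped Classical in
noncomputable def children (T : RTree n) (v : Fin n) : Finset (Fin n) :=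
  Finset.univ.filter (fun u => T.IsChild u v)

open scoped Classical in
noncomputable def leaves (T : RTree n) : Finset (Fin n) :=
  Finset.univ.filter (fun v => T.IsLeaf v)

/-- A transversal is a set of nodes meeting every root-to-leaf path. -/
def IsTransversal (T : RTree n) (S : Finset (Fin n)) : Prop :=
  ∀ ℓ, T.IsLeaf ℓ → ∃ v ∈ S, T.Ancestor v ℓ

open scoped Classical in
/-- `c T k` is the number of transversals of size `k` in `T`. -/
noncomputable def c (T : RTree n) (k : ℕ) : ℕ :=
  ((Finset.univ.powersetCard k).filter (fun S => T.IsTransversal S)).card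

/-- A caterpillar: the internal nodes form a chain under the ancestor
relation (equivalently, removing all leaves yields a rooted tree with
precisely one leaf). -/
def IsCaterpillar (T : RTree n) : Prop :=
  ∀ v w, T.IsInternal v → T.IsInternal w → T.Ancestor v w ∨ T.Ancestor w v

/-- A full caterpillar of degree `d`: a caterpillar in which every internal
node, except possibly the lowest one, has precisely `d` children (and no node
has more than `d` children). -/
def IsFullCaterpillar (T : RTree n) (d : ℕ) : Prop :=
  T.IsCaterpillar ∧ (∀ v, (T.children v).card ≤ d) ∧
    ∀ v, (∃ w, T.IsInternal w ∧ T.IsChild w v) → (T.children v).card = d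

/-- Isomorphism of rooted trees on `Fin n`. -/
def Isomorphic (T T' : RTree n) : Prop :=
  ∃ e : Fin n ≃ Fin n, e T.root = T'.root ∧ ∀ v, e (T.parent v) = T'.parent (e v)

end RTree

open RTree

/-! Every set containing the root is a transversal, and a set of size `k` containing the root is
the root together with an arbitrary `(k - 1)`-subset of the other `n - 1` nodes. -/

theorem Finset.choose_card_pred_le_card_filter_powersetCard {α : Type*} [Fintype α] [DecidableEq α]
    (a : α) (p : Finset α → Prop) [DecidablePred p] (hp : ∀ S, a ∈ S → p S) (k : ℕ) :
    (Fintype.card α - 1).choose k ≤ ((univ.powersetCard (k + 1)).filter p).card := by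
  have hcard : ((univ.erase a).powersetCard k).card = (Fintype.card α - 1).choose k := by
    rw [card_powersetCard, card_erase_of_mem (mem_univ a), card_univ]
  have hnotMem : ∀ A ∈ (univ.erase a).powersetCard k, a ∉ A := fun A hA ha =>
    (mem_erase.mp ((mem_powersetCard.mp hA).1 ha)).1 rfl
  rw [← hcard]
  refine card_le_card_of_injOn (insert a) (fun A hA => ?_) (fun A hA B hB hAB => ?_)
  · simp only [coe_filter, Set.mem_ofPred_eq, mem_powersetCard, subset_univ, true_and]
    rw [card_insert_of_notMem (hnotMem A hA), (mem_powersetCard.mp hA).2]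
    exact ⟨rfl, hp _ (mem_insert_self a A)⟩
  · rw [← erase_insert (hnotMem A hA), ← erase_insert (hnotMem B hB)]
    exact congrArg (erase · a) hAB

theorem RTree.isTransversal_of_root_mem {n : ℕ} (T : RTree n) {S : Finset (Fin n)}
    (h : T.root ∈ S) : T.IsTransversal S :=
  fun ℓ _ => ⟨T.root, h, T.reaches_root ℓ⟩

theorem stmt3_general (n : ℕ) (T : RTree n) :
    ∀ k, 1 ≤ k → k ≤ n - 2 → (n - 1).choose (k - 1) ≤ T.c k := by
  classical
  rintro k hk -
  obtain ⟨j, rfl⟩ : ∃ j, k = j + 1 := ⟨k - 1, by omega⟩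
  simpa only [RTree.c, Fintype.card_fin, Nat.add_sub_cancel] using
    Finset.choose_card_pred_le_card_filter_powersetCard T.root _
      (fun _ => T.isTransversal_of_root_mem) j

theorem stmt3 (n : ℕ) (hn : 2 ≤ n) (T : RTree n) :
    ∀ k, 1 ≤ k → k ≤ n - 2 → (n - 1).choose (k - 1) ≤ T.c k :=
  stmt3_general n T
end

section
/- For a rooted tree T with n ≥ 2 nodes, the upper bounds c(T,k) = binom(n,k) hold simultaneously for all k = 1,...,n−2 if and only if T has precisely one leaf (i.e., T is a path from the root). -/
open Finset

open RTree

/-! With a single leaf `ℓ`, every node lies on the root-to-`ℓ` path, so every nonempty set is a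
transversal and `c T k = (n choose k)` for all `k ≥ 1`. Conversely, two distinct leaves force
`n ≥ 3`, since the root is an ancestor of both and a leaf is an ancestor only of itself; then
`c T 1 = n` makes the singleton of one leaf a transversal, which misses the other leaf. -/

namespace RTree

variable {n : ℕ} (T : RTree n)

lemma mem_leaves {v : Fin n} : v ∈ T.leaves ↔ T.IsLeaf v := by
  simp [leaves]

lemma ancestor_root (v : Fin n) : T.Ancestor T.root v :=
  T.reaches_root v

lemma Ancestor.isInternal {T : RTree n} {y v : Fin n} (h : T.Ancestor y v) (hne : v ≠ y) :
    T.IsInternal y := by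
  obtain ⟨k, hk⟩ := h
  induction k generalizing v with
  | zero => exact absurd hk hne
  | succ k ih =>
    rw [Function.iterate_succ_apply'] at hk
    by_cases hroot : T.parent^[k] v = T.root
    · -- the path reached the root one step early, and stayed there
      rw [hroot, T.parent_root] at hk
      exact ih hne (hroot.trans hk)
    · exact ⟨_, hroot, hk⟩

lemma IsLeaf.eq_of_ancestor {T : RTree n} {ℓ v : Fin n} (hℓ : T.IsLeaf ℓ)
    (h : T.Ancestor ℓ v) : v = ℓ := by
  by_contra hne
  exact hℓ (h.isInternal hne)

noncomputable def depth (v : Fin n) : ℕ :=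
  Nat.find (T.reaches_root v)

lemma depth_lt_of_isChild {u v : Fin n} (h : T.IsChild u v) : T.depth v < T.depth u := by
  obtain ⟨hu, hparent⟩ := h
  have hspec : T.parent^[T.depth u] u = T.root := Nat.find_spec (T.reaches_root u)
  have hpos : 0 < T.depth u := by
    refine Nat.pos_of_ne_zero fun h0 => hu ?_
    rwa [h0, Function.iterate_zero_apply] at hspec
  have hv : T.parent^[T.depth u - 1] v = T.root := by
    rwa [← hparent, ← Function.iterate_succ_apply, Nat.succ_eq_add_one,
      Nat.sub_add_cancel hpos]
  have : T.depth v ≤ T.depth u - 1 := Nat.find_le hv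
  omega

lemma exists_isLeaf_descendant (v : Fin n) : ∃ ℓ, T.IsLeaf ℓ ∧ T.Ancestor v ℓ := by
  classical
  -- a deepest descendant of `v` is a leaf
  obtain ⟨ℓ, hℓ, hdeepest⟩ :=
    (univ.filter (T.Ancestor v)).exists_max_image T.depth ⟨v, by simpa using ⟨0, rfl⟩⟩
  rw [mem_filter] at hℓ
  refine ⟨ℓ, ?_, hℓ.2⟩
  rintro ⟨u, hu⟩
  obtain ⟨k, hk⟩ := hℓ.2
  have hdesc : u ∈ univ.filter (T.Ancestor v) :=
    mem_filter.2 ⟨mem_univ u, k + 1, by rw [Function.iterate_succ_apply, hu.2, hk]⟩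
  exact (hdeepest u hdesc).not_gt (T.depth_lt_of_isChild hu)

lemma leaves_nonempty : T.leaves.Nonempty :=
  let ⟨ℓ, hℓ, _⟩ := T.exists_isLeaf_descendant T.root
  ⟨ℓ, T.mem_leaves.2 hℓ⟩

lemma three_le_of_isLeaf {ℓ₁ ℓ₂ : Fin n} (h₁ : T.IsLeaf ℓ₁) (h₂ : T.IsLeaf ℓ₂) (hne : ℓ₁ ≠ ℓ₂) :
    3 ≤ n := by
  have hroot₁ : T.root ≠ ℓ₁ := fun h => hne (h₁.eq_of_ancestor (h ▸ T.ancestor_root ℓ₂)).symm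
  have hroot₂ : T.root ≠ ℓ₂ := fun h => hne (h₂.eq_of_ancestor (h ▸ T.ancestor_root ℓ₁))
  simpa [card_insert_of_notMem, hroot₁, hroot₂, hne] using
    card_le_univ ({T.root, ℓ₁, ℓ₂} : Finset (Fin n))

lemma IsTransversal.eq_of_singleton {T : RTree n} {ℓ ℓ' : Fin n} (hS : T.IsTransversal {ℓ})
    (hℓ : T.IsLeaf ℓ) (hℓ' : T.IsLeaf ℓ') : ℓ' = ℓ := by
  obtain ⟨v, hv, hanc⟩ := hS ℓ' hℓ'
  rw [mem_singleton] at hv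
  exact hℓ.eq_of_ancestor (hv ▸ hanc)

lemma isTransversal_of_card_leaves_eq_one (h : T.leaves.card = 1) {S : Finset (Fin n)}
    (hS : S.Nonempty) : T.IsTransversal S := by
  obtain ⟨ℓ₀, hℓ₀⟩ := card_eq_one.1 h
  have hunique : ∀ ℓ, T.IsLeaf ℓ → ℓ = ℓ₀ := fun ℓ hℓ =>
    mem_singleton.1 (hℓ₀ ▸ T.mem_leaves.2 hℓ)
  obtain ⟨v, hv⟩ := hS
  intro ℓ hℓ
  obtain ⟨ℓ', hℓ', hanc⟩ := T.exists_isLeaf_descendant v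
  exact ⟨v, hv, (hunique ℓ' hℓ').trans (hunique ℓ hℓ).symm ▸ hanc⟩

lemma c_eq_choose_iff (k : ℕ) :
    T.c k = n.choose k ↔ ∀ S : Finset (Fin n), S.card = k → T.IsTransversal S := by
  classical
  have hchoose : n.choose k = (univ.powersetCard k : Finset (Finset (Fin n))).card := by simp
  rw [c, hchoose, card_filter_eq_iff]
  simp [mem_powersetCard]

end RTree

theorem stmt4_general (n : ℕ) (T : RTree n) :
    (∀ k, 1 ≤ k → k ≤ n - 2 → T.c k = n.choose k) ↔ T.leaves.card = 1 := by
  constructor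
  · intro hc
    by_contra hne
    obtain ⟨ℓ₁, h₁, ℓ₂, h₂, hℓ⟩ :=
      one_lt_card.1 (lt_of_le_of_ne T.leaves_nonempty.card_pos (Ne.symm hne))
    rw [T.mem_leaves] at h₁ h₂
    have hn := T.three_le_of_isLeaf h₁ h₂ hℓ
    have htrans := (T.c_eq_choose_iff 1).1 (hc 1 le_rfl (by omega)) {ℓ₁} (card_singleton ℓ₁)
    exact hℓ (htrans.eq_of_singleton h₁ h₂).symm
  · intro h k hk _
    exact (T.c_eq_choose_iff k).2 fun S hS =>
      T.isTransversal_of_card_leaves_eq_one h (card_pos.1 (by omega))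

theorem stmt4 (n : ℕ) (hn : 2 ≤ n) (T : RTree n) :
    (∀ k, 1 ≤ k → k ≤ n - 2 → T.c k = n.choose k) ↔ T.leaves.card = 1 :=
  stmt4_general n T
end

section
/- For a rooted tree T with n ≥ 2 nodes, the lower bounds c(T,k) = binom(n−1,k−1) hold simultaneously for all k = 1,...,n−2 if and only if T has precisely n−1 leaves, in which case the root has n−1 children all of which are leaves. -/
open Finset

open RTree


namespace RTree

section Helpers

variable {n : ℕ}

lemma root_anc (T : RTree n) (v : Fin n) : T.Ancestor T.root v := T.reaches_root v

lemma self_anc (T : RTree n) (v : Fin n) : T.Ancestor v v := ⟨0, rfl⟩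

lemma eq_root_of_parent_self (T : RTree n) {v : Fin n} (h : T.parent v = v) :
    v = T.root := by
  obtain ⟨k, hk⟩ := T.reaches_root v
  rwa [Function.iterate_fixed h] at hk

lemma root_internal (T : RTree n) (hn : 2 ≤ n) : T.IsInternal T.root := by
  classical
  have : Nontrivial (Fin n) := Fin.nontrivial_iff_two_le.mpr hn
  obtain ⟨v, hv⟩ := exists_ne T.root
  have hP : ∃ k, T.parent^[k] v = T.root := T.reaches_root v
  obtain ⟨m, hm⟩ : ∃ m, Nat.find hP = m + 1 := by
    refine ⟨Nat.find hP - 1, ?_⟩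
    have h0 : Nat.find hP ≠ 0 := by
      intro h
      have := Nat.find_spec hP
      rw [h] at this
      exact hv this
    omega
  refine ⟨T.parent^[m] v, ?_, ?_⟩
  · intro h
    exact Nat.find_min hP (by omega : m < Nat.find hP) h
  · have := Nat.find_spec hP
    rwa [hm, Function.iterate_succ_apply'] at this

lemma leaf_ne_root (T : RTree n) (hn : 2 ≤ n) {ℓ : Fin n} (h : T.IsLeaf ℓ) :
    ℓ ≠ T.root := by
  intro he; rw [he] at h; exact h (T.root_internal hn)

lemma anc_of_parent_root (T : RTree n) {ℓ y : Fin n} (hp : T.parent ℓ = T.root)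
    (h : T.Ancestor y ℓ) : y = ℓ ∨ y = T.root := by
  obtain ⟨k, hk⟩ := h
  cases k with
  | zero => exact Or.inl hk.symm
  | succ m =>
    right
    rw [Function.iterate_succ_apply, hp, Function.iterate_fixed T.parent_root] at hk
    exact hk.symm

/-- If every non-root node is a leaf child of the root, the leaf set is
exactly the non-root nodes. -/
lemma leaves_eq_of_star (T : RTree n) (hn : 2 ≤ n)
    (hstar : ∀ v, v ≠ T.root → T.IsChild v T.root ∧ T.IsLeaf v) :
    T.leaves = Finset.univ.erase T.root := by
  classical
  ext v
  simp only [RTree.leaves, Finset.mem_filter, Finset.mem_univ, true_and,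
    Finset.mem_erase, and_true]
  constructor
  · exact fun h => T.leaf_ne_root hn h
  · exact fun h => (hstar v h).2

lemma card_erase_root (T : RTree n) (hn : 2 ≤ n) :
    (Finset.univ.erase T.root).card = n - 1 := by
  rw [Finset.card_erase_of_mem (Finset.mem_univ _), Finset.card_univ, Fintype.card_fin]

/-- `leaves.card = n-1` forces the star structure. -/
lemma star_of_leaves (T : RTree n) (hn : 2 ≤ n) (hL : T.leaves.card = n - 1) :
    ∀ v, v ≠ T.root → T.IsChild v T.root ∧ T.IsLeaf v := by
  classical
  have hsub : T.leaves ⊆ Finset.univ.erase T.root := by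
    intro v hv
    simp only [RTree.leaves, Finset.mem_filter] at hv
    exact Finset.mem_erase.mpr ⟨T.leaf_ne_root hn hv.2, Finset.mem_univ _⟩
  have heq : T.leaves = Finset.univ.erase T.root :=
    Finset.eq_of_subset_of_card_le hsub (by rw [T.card_erase_root hn, hL])
  have hleaf : ∀ v : Fin n, v ≠ T.root → T.IsLeaf v := by
    intro v hv
    have : v ∈ T.leaves := heq ▸ Finset.mem_erase.mpr ⟨hv, Finset.mem_univ _⟩
    simpa [RTree.leaves] using this
  intro v hv
  refine ⟨⟨hv, ?_⟩, hleaf v hv⟩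
  by_contra hne
  exact hleaf _ hne ⟨v, hv, rfl⟩

/-- Counting `k`-subsets of `Fin n` containing a fixed element. -/
lemma card_filter_mem (a : Fin n) (k : ℕ) (hk : 1 ≤ k) :
    ((Finset.univ.powersetCard k).filter (fun S => a ∈ S)).card
      = (n - 1).choose (k - 1) := by
  classical
  have h1 : (((Finset.univ.erase a) : Finset (Fin n)).powersetCard (k - 1)).card
      = (n - 1).choose (k - 1) := by
    rw [Finset.card_powersetCard, Finset.card_erase_of_mem (Finset.mem_univ _),
      Finset.card_univ, Fintype.card_fin]
  rw [← h1]
  refine Finset.card_bij' (fun S _ => S.erase a) (fun S _ => insert a S) ?_ ?_ ?_ ?_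
  · intro S hS
    simp only [Finset.mem_filter, Finset.mem_powersetCard] at hS
    refine Finset.mem_powersetCard.mpr ⟨?_, ?_⟩
    · intro x hx
      simp only [Finset.mem_erase] at hx ⊢
      exact ⟨hx.1, Finset.mem_univ _⟩
    · rw [Finset.card_erase_of_mem hS.2, hS.1.2]
  · intro S hS
    simp only [Finset.mem_powersetCard] at hS
    have ha : a ∉ S := fun h => (Finset.mem_erase.mp (hS.1 h)).1 rfl
    simp only [Finset.mem_filter, Finset.mem_powersetCard]
    refine ⟨⟨Finset.subset_univ _, ?_⟩, Finset.mem_insert_self _ _⟩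
    rw [Finset.card_insert_of_notMem ha, hS.2]
    omega
  · intro S hS
    simp only [Finset.mem_filter] at hS
    exact Finset.insert_erase hS.2
  · intro S hS
    simp only [Finset.mem_powersetCard] at hS
    exact Finset.erase_insert (fun h => (Finset.mem_erase.mp (hS.1 h)).1 rfl)

/-- In the star, a set of size at most `n-2` is a transversal iff it contains
the root. -/
lemma star_transversal (T : RTree n) (hn : 2 ≤ n)
    (hstar : ∀ v, v ≠ T.root → T.IsChild v T.root ∧ T.IsLeaf v)
    {S : Finset (Fin n)} (hS : S.card ≤ n - 2) :
    T.IsTransversal S ↔ T.root ∈ S := by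
  constructor
  · intro ht
    by_contra hroot
    have hsub : T.leaves ⊆ S := by
      intro ℓ hℓ
      have hleaf : T.IsLeaf ℓ := by simpa [RTree.leaves] using hℓ
      obtain ⟨v, hvS, hva⟩ := ht ℓ hleaf
      have hne : ℓ ≠ T.root := T.leaf_ne_root hn hleaf
      rcases T.anc_of_parent_root ((hstar ℓ hne).1.2) hva with h | h
      · rwa [h] at hvS
      · exact absurd (h ▸ hvS) hroot
    have := Finset.card_le_card hsub
    rw [T.leaves_eq_of_star hn hstar, T.card_erase_root hn] at this
    omega
  · intro hroot ℓ _
    exact ⟨T.root, hroot, T.root_anc ℓ⟩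

/-- In the star, the transversal counts are binomial. -/
lemma star_c (T : RTree n) (hn : 2 ≤ n)
    (hstar : ∀ v, v ≠ T.root → T.IsChild v T.root ∧ T.IsLeaf v)
    (k : ℕ) (hk1 : 1 ≤ k) (hk2 : k ≤ n - 2) :
    T.c k = (n - 1).choose (k - 1) := by
  classical
  rw [← card_filter_mem T.root k hk1]
  unfold RTree.c
  congr 1
  refine Finset.filter_congr ?_
  intro S hS
  have hcard : S.card = k := (Finset.mem_powersetCard.mp hS).2
  exact T.star_transversal hn hstar (by omega)

end Helpers

section Main

variable {n : ℕ}

open scoped Classical in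
/-- The non-transversals of size `n-2` are the complements of pairs
`{root, ℓ}` with `ℓ` a leaf child of the root. -/
lemma nontransversal_eq (T : RTree n) (hn : 3 ≤ n) :
    ((Finset.univ.powersetCard (n - 2)).filter (fun S => ¬ T.IsTransversal S))
      = (Finset.univ.filter (fun v => T.IsChild v T.root ∧ T.IsLeaf v)).image
          (fun ℓ => Finset.univ \ {T.root, ℓ}) := by
  classical
  have hn2 : 2 ≤ n := by omega
  ext S
  simp only [Finset.mem_filter, Finset.mem_powersetCard, Finset.mem_image,
    Finset.mem_univ, true_and]
  constructor
  · rintro ⟨⟨-, hcard⟩, hnt⟩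
    simp only [RTree.IsTransversal, not_forall] at hnt
    obtain ⟨ℓ, hleaf, hno⟩ := hnt
    push_neg at hno
    have hnoanc : ∀ v ∈ S, ¬ T.Ancestor v ℓ := hno
    have hroot : T.root ∉ S := fun h => hnoanc _ h (T.root_anc ℓ)
    have hℓS : ℓ ∉ S := fun h => hnoanc _ h (T.self_anc ℓ)
    have hℓr : ℓ ≠ T.root := T.leaf_ne_root hn2 hleaf
    have hsub : S ⊆ Finset.univ \ {T.root, ℓ} := by
      intro x hx
      simp only [Finset.mem_sdiff, Finset.mem_univ, Finset.mem_insert,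
        Finset.mem_singleton, true_and]
      push_neg
      exact ⟨fun h => hroot (h ▸ hx), fun h => hℓS (h ▸ hx)⟩
    have hcard2 : (Finset.univ \ ({T.root, ℓ} : Finset (Fin n))).card = n - 2 := by
      rw [Finset.card_sdiff_of_subset (Finset.subset_univ _), Finset.card_univ, Fintype.card_fin,
        Finset.card_insert_of_notMem (by simpa using (Ne.symm hℓr)),
        Finset.card_singleton]
    have hSeq : S = Finset.univ \ {T.root, ℓ} :=
      Finset.eq_of_subset_of_card_le hsub (by omega)
    have hpar : T.parent ℓ = T.root := by
      have hanc : T.Ancestor (T.parent ℓ) ℓ := ⟨1, rfl⟩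
      have hp : T.parent ℓ ∉ S := fun h => hnoanc _ h hanc
      rw [hSeq] at hp
      simp only [Finset.mem_sdiff, Finset.mem_univ, Finset.mem_insert,
        Finset.mem_singleton, true_and, not_not, not_and, not_forall] at hp
      rcases hp with h | h
      · exact h
      · exact absurd (T.eq_root_of_parent_self h) hℓr
    exact ⟨ℓ, ⟨⟨hℓr, hpar⟩, hleaf⟩, hSeq.symm⟩
  · rintro ⟨ℓ, ⟨hchild, hleaf⟩, rfl⟩
    have hℓr : ℓ ≠ T.root := hchild.1
    have hcard2 : (Finset.univ \ ({T.root, ℓ} : Finset (Fin n))).card = n - 2 := by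
      rw [Finset.card_sdiff_of_subset (Finset.subset_univ _), Finset.card_univ, Fintype.card_fin,
        Finset.card_insert_of_notMem (by simpa using (Ne.symm hℓr)),
        Finset.card_singleton]
    refine ⟨⟨Finset.subset_univ _, hcard2⟩, ?_⟩
    intro ht
    obtain ⟨v, hvS, hva⟩ := ht ℓ hleaf
    simp only [Finset.mem_sdiff, Finset.mem_univ, Finset.mem_insert,
      Finset.mem_singleton, true_and] at hvS
    rcases T.anc_of_parent_root hchild.2 hva with h | h
    · exact hvS (Or.inr h)
    · exact hvS (Or.inl h)

end Main

end RTree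

theorem stmt5 (n : ℕ) (hn : 2 ≤ n) (T : RTree n) :
    ((∀ k, 1 ≤ k → k ≤ n - 2 → T.c k = (n - 1).choose (k - 1)) ↔
      T.leaves.card = n - 1) ∧
    (T.leaves.card = n - 1 →
      (T.children T.root).card = n - 1 ∧ ∀ v, T.IsChild v T.root → T.IsLeaf v) := by
  classical
  constructor
  · constructor
    · -- forward direction
      intro hyp
      rcases eq_or_lt_of_le hn with h2 | h3
      · -- n = 2 : handle directly
        have hn2 : n = 2 := h2.symm
        subst hn2
        have : Nontrivial (Fin 2) := Fin.nontrivial_iff_two_le.mpr le_rfl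
        obtain ⟨o, ho⟩ := exists_ne T.root
        have huniq : ∀ w : Fin 2, w = T.root ∨ w = o := by
          intro w
          by_contra hc
          push_neg at hc
          have hsub : ({T.root, o, w} : Finset (Fin 2)) ⊆ Finset.univ :=
            Finset.subset_univ _
          have := Finset.card_le_card hsub
          rw [Finset.card_univ, Fintype.card_fin] at this
          have h3 : ({T.root, o, w} : Finset (Fin 2)).card = 3 := by
            rw [Finset.card_insert_of_notMem (by simp [Ne.symm ho, Ne.symm hc.1]),
              Finset.card_insert_of_notMem (by simp [Ne.symm hc.2]), Finset.card_singleton]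
          omega
        have hstar : ∀ v : Fin 2, v ≠ T.root → T.IsChild v T.root ∧ T.IsLeaf v := by
          intro v hv
          have hvo : v = o := (huniq v).resolve_left hv
          subst hvo
          have hpar : T.parent v = T.root := by
            rcases huniq (T.parent v) with h | h
            · exact h
            · exact absurd (T.eq_root_of_parent_self h) hv
          refine ⟨⟨hv, hpar⟩, ?_⟩
          rintro ⟨u, hu, hpu⟩
          rcases huniq u with h | h
          · exact hu h
          · subst h
            exact hv (T.eq_root_of_parent_self hpu)
        rw [T.leaves_eq_of_star le_rfl hstar, T.card_erase_root le_rfl]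
      · -- n ≥ 3 : use k = n - 2
        have hn3 : 3 ≤ n := h3
        have hkey := hyp (n - 2) (by omega) le_rfl
        set D : Finset (Fin n) :=
          Finset.univ.filter (fun v => T.IsChild v T.root ∧ T.IsLeaf v) with hD
        have hBcard :
            ((Finset.univ.powersetCard (n - 2) : Finset (Finset (Fin n))).filter
              (fun S => ¬ T.IsTransversal S)).card = D.card := by
          rw [T.nontransversal_eq hn3]
          apply Finset.card_image_of_injOn
          intro x hx y hy hxy
          simp only [Finset.mem_coe, Finset.mem_filter] at hx hy
          have hx1 : x ≠ T.root := hx.2.1.1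
          have : ({T.root, x} : Finset (Fin n)) = {T.root, y} := by
            have h1 : (Finset.univ \ ({T.root, x} : Finset (Fin n)))ᶜ
                = (Finset.univ \ ({T.root, y} : Finset (Fin n)))ᶜ := by
              simp only at hxy
              rw [hxy]
            have h2 : ({T.root, x} : Finset (Fin n))ᶜᶜ = ({T.root, y} : Finset (Fin n))ᶜᶜ := by
              simpa [Finset.compl_eq_univ_sdiff] using h1
            simpa using h2
          have : x ∈ ({T.root, y} : Finset (Fin n)) := by
            rw [← this]; simp
          simpa [Finset.mem_insert, hx1] using this
        have htot :
            T.c (n - 2) +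
              ((Finset.univ.powersetCard (n - 2) : Finset (Finset (Fin n))).filter
                (fun S => ¬ T.IsTransversal S)).card
              = n.choose (n - 2) := by
          unfold RTree.c
          rw [Finset.card_filter_add_card_filter_not, Finset.card_powersetCard,
            Finset.card_univ, Fintype.card_fin]
        rw [hkey, hBcard] at htot
        have hc1 : n.choose (n - 2) = n.choose 2 := by
          have := Nat.choose_symm (show 2 ≤ n by omega) (n := n)
          simpa using this
        have hc2 : (n - 1).choose (n - 2 - 1) = (n - 1).choose 2 := by
          have he : n - 2 - 1 = (n - 1) - 2 := by omega
          rw [he]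
          exact Nat.choose_symm (by omega)
        obtain ⟨m, hm⟩ : ∃ m, n = m + 1 := ⟨n - 1, by omega⟩
        have hc3 : n.choose 2 = (n - 1).choose 1 + (n - 1).choose 2 := by
          subst hm
          simpa using Nat.choose_succ_succ' m 1
        have hDcard : D.card = n - 1 := by
          rw [hc2, hc1, hc3, Nat.choose_one_right] at htot
          omega
        have hDsub : D ⊆ Finset.univ.erase T.root := by
          intro v hv
          simp only [hD, Finset.mem_filter] at hv
          exact Finset.mem_erase.mpr ⟨hv.2.1.1, Finset.mem_univ _⟩
        have hDeq : D = Finset.univ.erase T.root :=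
          Finset.eq_of_subset_of_card_le hDsub
            (by rw [T.card_erase_root (by omega), hDcard])
        have hstar : ∀ v, v ≠ T.root → T.IsChild v T.root ∧ T.IsLeaf v := by
          intro v hv
          have : v ∈ D := hDeq ▸ Finset.mem_erase.mpr ⟨hv, Finset.mem_univ _⟩
          simpa [hD] using this
        rw [T.leaves_eq_of_star (by omega) hstar, T.card_erase_root (by omega)]
    · -- reverse direction
      intro hL k hk1 hk2
      exact T.star_c hn (T.star_of_leaves hn hL) k hk1 hk2
  · intro hL
    have hstar := T.star_of_leaves hn hL
    constructor
    · have : T.children T.root = Finset.univ.erase T.root := by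
        ext v
        simp only [RTree.children, Finset.mem_filter, Finset.mem_univ, true_and,
          Finset.mem_erase, and_true]
        constructor
        · exact fun h => h.1
        · exact fun h => (hstar v h).1
      rw [this, T.card_erase_root hn]
    · intro v hv
      exact (hstar v hv.1).2
end

section
/- Lifting lemma: Let T be a rooted tree defined by parent function p, let x be a non-root node of T, and let y be a proper ancestor of p(x). Let T' be the rooted tree obtained by redefining the parent of x to be y (keeping all other parents unchanged). Then every transversal in T' is also a transversal in T; consequently c(T,k) ≥ c(T',k) for all k. -/
open Finset

open RTree

lemma ancestor_trans' {n : ℕ} {T : RTree n} {a b c : Fin n}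
    (h1 : T.Ancestor a b) (h2 : T.Ancestor b c) : T.Ancestor a c := by
  obtain ⟨j, hj⟩ := h1; obtain ⟨k, hk⟩ := h2
  exact ⟨j + k, by rw [Function.iterate_add_apply, hk, hj]⟩

lemma eq_root_of_iterate' {n : ℕ} {T : RTree n} {v : Fin n} {m : ℕ}
    (hm : 0 < m) (h : T.parent^[m] v = v) : v = T.root := by
  obtain ⟨K, hK⟩ := T.reaches_root v
  have hmul : ∀ a, T.parent^[a * m] v = v := by
    intro a
    induction a with
    | zero => simp
    | succ a ih => rw [Nat.succ_mul, Function.iterate_add_apply, h, ih]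
  have h2 : T.parent^[K * m] v = T.root := by
    obtain ⟨d, hd⟩ := Nat.exists_eq_add_of_le (Nat.le_mul_of_pos_right K hm)
    rw [hd, Nat.add_comm, Function.iterate_add_apply, hK,
      Function.iterate_fixed T.parent_root]
  rw [← hmul K, h2]

theorem stmt7 (n : ℕ) (T T' : RTree n) (x y : Fin n)
    (hx : x ≠ T.root)
    (hanc : T.Ancestor y (T.parent x)) (hproper : y ≠ T.parent x)
    (hroot : T'.root = T.root)
    (hpar : T'.parent = Function.update T.parent x y) :
    (∀ S : Finset (Fin n), T'.IsTransversal S → T.IsTransversal S) ∧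
    ∀ k, T'.c k ≤ T.c k := by
  -- x ≠ y
  have hxy : x ≠ y := by
    rintro rfl
    obtain ⟨k, hk⟩ := hanc
    exact hx (eq_root_of_iterate' (m := k + 1) (Nat.succ_pos k)
      (by rw [Function.iterate_succ_apply]; exact hk))
  -- y is an ancestor of x in T
  have hyx : T.Ancestor y x := ancestor_trans' hanc ⟨1, rfl⟩
  -- y is internal in T
  have hyint : T.IsInternal y := by
    classical
    have hex : ∃ j, T.parent^[j] x = y := hyx
    have hjspec : T.parent^[Nat.find hex] x = y := Nat.find_spec hex
    have hj0 : Nat.find hex ≠ 0 := by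
      intro h0
      rw [h0] at hjspec
      exact hxy hjspec
    obtain ⟨j', hj'⟩ : ∃ j', Nat.find hex = j' + 1 :=
      ⟨Nat.find hex - 1, (Nat.succ_pred_eq_of_pos (Nat.pos_of_ne_zero hj0)).symm⟩
    rw [hj'] at hjspec
    set w := T.parent^[j'] x with hw
    have hpw : T.parent w = y := by
      rw [hw, ← Function.iterate_succ_apply' T.parent j' x]; exact hjspec
    have hwy : w ≠ y := fun h => Nat.find_min hex (by omega : j' < Nat.find hex) h
    have hwroot : w ≠ T.root := by
      intro h
      apply hwy
      rw [h, ← T.parent_root, ← h, hpw]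
    exact ⟨w, hwroot, hpw⟩
  -- every T'-ancestor of v is a T-ancestor of v
  have hancstep : ∀ v : Fin n, T.Ancestor (T'.parent v) v := by
    intro v
    by_cases hv : v = x
    · subst hv
      have : T'.parent v = y := by rw [hpar]; simp
      rw [this]
      exact hyx
    · have : T'.parent v = T.parent v := by rw [hpar]; exact Function.update_of_ne hv _ _
      rw [this]; exact ⟨1, rfl⟩
  have hanckey : ∀ (k : ℕ) (v : Fin n), T.Ancestor (T'.parent^[k] v) v := by
    intro k
    induction k with
    | zero => intro v; exact ⟨0, rfl⟩
    | succ k ih =>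
      intro v
      rw [Function.iterate_succ_apply]
      exact ancestor_trans' (ih (T'.parent v)) (hancstep v)
  have hancT : ∀ u v : Fin n, T'.Ancestor u v → T.Ancestor u v := by
    rintro u v ⟨k, rfl⟩
    exact hanckey k v
  -- every T-leaf is a T'-leaf
  have hleaf : ∀ ℓ : Fin n, T.IsLeaf ℓ → T'.IsLeaf ℓ := by
    intro ℓ hℓ ⟨u, hune, hpu⟩
    by_cases hu : u = x
    · subst hu
      have : T'.parent u = y := by rw [hpar]; simp
      rw [this] at hpu
      subst hpu
      exact hℓ hyint
    · have : T'.parent u = T.parent u := by rw [hpar]; exact Function.update_of_ne hu _ _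
      rw [this] at hpu
      exact hℓ ⟨u, by rw [← hroot]; exact hune, hpu⟩
  have main : ∀ S : Finset (Fin n), T'.IsTransversal S → T.IsTransversal S := by
    intro S hS ℓ hℓ
    obtain ⟨v, hvS, hv⟩ := hS ℓ (hleaf ℓ hℓ)
    exact ⟨v, hvS, hancT v ℓ hv⟩
  refine ⟨main, fun k => ?_⟩
  classical
  unfold RTree.c
  apply Finset.card_le_card
  intro S hS
  simp only [Finset.mem_filter] at hS ⊢
  exact ⟨hS.1, main S hS.2⟩
end

section
/- Strict lifting lemma: Let T be a rooted tree defined by parent function p, let x be a non-root node, and let y be a proper ancestor of p(x). Let T' be obtained by redefining the parent of x to be y. Then the set consisting of p(x) together with all leaves of T that are not descendants of p(x) is a transversal in T but not in T'; hence c(T,k) > c(T',k) for at least one k. -/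
open Finset

namespace RTree
variable {n : ℕ}

lemma anc_trans' (T : RTree n) {a b c : Fin n} (h1 : T.Ancestor a b) (h2 : T.Ancestor b c) :
    T.Ancestor a c := by
  obtain ⟨i, hi⟩ := h1; obtain ⟨j, hj⟩ := h2
  exact ⟨i + j, by rw [Function.iterate_add_apply, hj, hi]⟩

lemma fixed_eq_root' (T : RTree n) {a : Fin n} (h : T.parent a = a) : a = T.root := by
  obtain ⟨k, hk⟩ := T.reaches_root a
  rw [Function.iterate_fixed h] at hk; exact hk

lemma anc_antisymm' (T : RTree n) {a b : Fin n} (h1 : T.Ancestor a b) (h2 : T.Ancestor b a) :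
    a = b := by
  obtain ⟨i, hi⟩ := h1; obtain ⟨j, hj⟩ := h2
  rcases Nat.eq_zero_or_pos (i + j) with h | h
  · have hi0 : i = 0 := by omega
    subst hi0; simpa using hi.symm
  · have hcyc : T.parent^[i + j] a = a := by
      rw [Function.iterate_add_apply, hj, hi]
    have hcycm : ∀ m, T.parent^[m * (i + j)] a = a := by
      intro m; induction m with
      | zero => simp
      | succ m ih => rw [Nat.succ_mul, Function.iterate_add_apply, hcyc, ih]
    obtain ⟨d, hd⟩ := T.reaches_root a
    have hM : (d + 1) * (i + j) = ((d + 1) * (i + j) - d) + d := by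
      have : d + 1 ≤ (d + 1) * (i + j) := Nat.le_mul_of_pos_right _ h
      omega
    have haroot : a = T.root := by
      have := hcycm (d + 1)
      rw [hM, Function.iterate_add_apply, hd, Function.iterate_fixed T.parent_root] at this
      exact this.symm
    rw [haroot] at hj ⊢
    rw [Function.iterate_fixed T.parent_root] at hj
    exact hj

lemma anc_internal' (T : RTree n) {v w : Fin n} (h : T.Ancestor v w) (hne : v ≠ w) :
    T.IsInternal v := by
  have hP : ∃ k, T.parent^[k] w = v := h
  set k := Nat.find hP with hkdef
  have hk : T.parent^[k] w = v := Nat.find_spec hP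
  have hk0 : k ≠ 0 := by
    intro h0; rw [h0] at hk; exact hne hk.symm
  have hk1 : k - 1 + 1 = k := Nat.sub_add_cancel (Nat.one_le_iff_ne_zero.mpr hk0)
  have hpu : T.parent (T.parent^[k-1] w) = v := by
    rw [← Function.iterate_succ_apply' T.parent (k-1) w, Nat.succ_eq_add_one, hk1]
    exact hk
  refine ⟨T.parent^[k-1] w, ?_, hpu⟩
  intro hroot
  have hv : v = T.root := by
    rw [hroot, T.parent_root] at hpu
    exact hpu.symm
  exact Nat.find_min hP (show k - 1 < k by omega) (by rw [hroot, hv])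

open scoped Classical in
lemma exists_leaf_desc' (T : RTree n) (v : Fin n) :
    ∃ ℓ, T.IsLeaf ℓ ∧ T.Ancestor v ℓ := by
  classical
  set D : Finset (Fin n) := Finset.univ.filter (fun u => T.Ancestor v u) with hD
  have hne : D.Nonempty := ⟨v, by simp [hD]; exact ⟨0, rfl⟩⟩
  obtain ⟨ℓ, hℓD, hmax⟩ := D.exists_max_image (fun u => Nat.find (T.reaches_root u)) hne
  have hℓanc : T.Ancestor v ℓ := by simpa [hD] using hℓD
  refine ⟨ℓ, ?_, hℓanc⟩
  intro ⟨u, hur, hpu⟩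
  have huD : u ∈ D := by
    simp only [hD, mem_filter, mem_univ, true_and]
    obtain ⟨k, hk⟩ := hℓanc
    exact ⟨k + 1, by rw [Function.iterate_succ_apply, hpu, hk]⟩
  have hle := hmax u huD
  -- depth u > depth ℓ
  have hu1 : 1 ≤ Nat.find (T.reaches_root u) := by
    rw [Nat.one_le_iff_ne_zero]
    intro h0
    have := Nat.find_spec (T.reaches_root u)
    rw [h0] at this
    exact hur this
  have hdle : Nat.find (T.reaches_root (T.parent u)) ≤ Nat.find (T.reaches_root u) - 1 := by
    apply Nat.find_le
    have := Nat.find_spec (T.reaches_root u)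
    rw [← Nat.sub_add_cancel hu1, Function.iterate_succ_apply] at this
    exact this
  rw [hpu] at hdle
  omega

end RTree

open RTree


open scoped Classical in
theorem stmt8 (n : ℕ) (T T' : RTree n) (x y : Fin n)
    (hx : x ≠ T.root)
    (hanc : T.Ancestor y (T.parent x)) (hproper : y ≠ T.parent x)
    (hroot : T'.root = T.root)
    (hpar : T'.parent = Function.update T.parent x y) :
    T.IsTransversal
      (insert (T.parent x) (T.leaves.filter fun ℓ => ¬ T.Ancestor (T.parent x) ℓ)) ∧
    ¬ T'.IsTransversal
      (insert (T.parent x) (T.leaves.filter fun ℓ => ¬ T.Ancestor (T.parent x) ℓ)) ∧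
    ∃ k, T'.c k < T.c k := by
  classical
  set px := T.parent x with hpx
  have hpar_x : T'.parent x = y := by rw [hpar]; exact Function.update_self _ _ _
  have hpar_ne : ∀ z, z ≠ x → T'.parent z = T.parent z := fun z hz => by
    rw [hpar]; exact Function.update_of_ne hz _ _
  have hpx_anc_x : T.Ancestor px x := ⟨1, rfl⟩
  have hx_ne_px : x ≠ px := by
    intro h
    exact hx (T.fixed_eq_root' h.symm)
  have hnxy : ¬ T.Ancestor x y := by
    intro hxy
    have h1 : T.Ancestor x px := T.anc_trans' hxy hanc
    exact hx_ne_px (T.anc_antisymm' h1 hpx_anc_x)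
  have hBsub : ∀ j v, T'.parent^[j] v = x → T.Ancestor x v := by
    intro j
    induction j with
    | zero => intro v hv; exact hv ▸ ⟨0, rfl⟩
    | succ j ih =>
      intro v hv
      by_cases hvx : v = x
      · exact hvx ▸ ⟨0, rfl⟩
      · rw [Function.iterate_succ_apply, hpar_ne v hvx] at hv
        obtain ⟨i, hi⟩ := ih _ hv
        exact ⟨i + 1, by rw [Function.iterate_succ_apply, hi]⟩
  have hy_iter : ∀ i, T'.parent^[i] y = T.parent^[i] y := by
    intro i
    induction i with
    | zero => rfl
    | succ i ih =>
      rw [Function.iterate_succ_apply', Function.iterate_succ_apply', ih,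
        hpar_ne _ (fun h => hnxy ⟨i, h⟩)]
  have hT'subT : ∀ v w, T'.Ancestor v w → T.Ancestor v w := by
    intro v w ⟨m, hm⟩
    induction m generalizing w with
    | zero => exact hm ▸ ⟨0, rfl⟩
    | succ m ih =>
      rw [Function.iterate_succ_apply] at hm
      by_cases hwx : w = x
      · subst hwx
        rw [hpar_x] at hm
        exact T.anc_trans' (T.anc_trans' (ih _ hm) hanc) hpx_anc_x
      · rw [hpar_ne w hwx] at hm
        obtain ⟨i, hi⟩ := ih _ hm
        exact ⟨i + 1, by rw [Function.iterate_succ_apply, hi]⟩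
  set L : Finset (Fin n) := T.leaves.filter (fun ℓ => ¬ T.Ancestor px ℓ) with hL
  set S : Finset (Fin n) := insert px L with hS
  have hmemL : ∀ v, v ∈ L → T.IsLeaf v ∧ ¬ T.Ancestor px v := by
    intro v hv
    simp only [hL, RTree.leaves, mem_filter, mem_univ, true_and] at hv
    exact hv
  have hST : T.IsTransversal S := by
    intro ℓ hℓ
    by_cases h : T.Ancestor px ℓ
    · exact ⟨px, mem_insert_self _ _, h⟩
    · refine ⟨ℓ, mem_insert_of_mem ?_, ⟨0, rfl⟩⟩
      simp only [hL, RTree.leaves, mem_filter, mem_univ, true_and]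
      exact ⟨hℓ, h⟩
  have hST' : ¬ T'.IsTransversal S := by
    intro htrans
    obtain ⟨ℓ, hℓleaf', hℓanc'⟩ := T'.exists_leaf_desc' x
    obtain ⟨v, hvS, hvanc⟩ := htrans ℓ hℓleaf'
    obtain ⟨k, hk⟩ := hℓanc'
    obtain ⟨m, hm⟩ := hvanc
    rcases le_or_gt m k with hmk | hmk
    · have hxv : T.Ancestor x v := by
        apply hBsub (k - m) v
        rw [← hm, ← Function.iterate_add_apply, Nat.sub_add_cancel hmk, hk]
      rcases mem_insert.mp hvS with hvpx | hvL
      · subst hvpx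
        exact hx_ne_px (T.anc_antisymm' hxv hpx_anc_x)
      · obtain ⟨hvleaf, hvnanc⟩ := hmemL v hvL
        exact hvnanc (T.anc_trans' hpx_anc_x hxv)
    · have hvy : T.Ancestor v y := by
        have h1 : T'.parent^[m - k] x = v := by
          rw [← hk, ← Function.iterate_add_apply, Nat.sub_add_cancel hmk.le, hm]
        obtain ⟨a, ha⟩ : ∃ a, m - k = a + 1 := ⟨m - k - 1, by omega⟩
        have h3 : T'.parent^[a + 1] x = T'.parent^[a] y := by
          rw [Function.iterate_succ_apply, hpar_x]
        refine ⟨a, ?_⟩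
        rw [← hy_iter, ← h3, ← ha, h1]
      have hvpx' : T.Ancestor v px := T.anc_trans' hvy hanc
      rcases mem_insert.mp hvS with hvpx | hvL
      · subst hvpx
        exact hproper (T.anc_antisymm' hanc hvy)
      · obtain ⟨hvleaf, hvnanc⟩ := hmemL v hvL
        have hvne : v ≠ px := fun h => hvnanc (h ▸ ⟨0, rfl⟩)
        exact hvleaf (T.anc_internal' hvpx' hvne)
  have hyint : T.IsInternal y := T.anc_internal' hanc hproper
  have hleaf_leaf : ∀ ℓ, T.IsLeaf ℓ → T'.IsLeaf ℓ := by
    intro ℓ hℓ ⟨u, hur, hpu⟩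
    by_cases hux : u = x
    · subst hux
      rw [hpar_x] at hpu
      exact hℓ (hpu ▸ hyint)
    · rw [hpar_ne u hux] at hpu
      exact hℓ ⟨u, hroot ▸ hur, hpu⟩
  have hsubT : ∀ S' : Finset (Fin n), T'.IsTransversal S' → T.IsTransversal S' := by
    intro S' h ℓ hℓ
    obtain ⟨v, hv, ha⟩ := h ℓ (hleaf_leaf ℓ hℓ)
    exact ⟨v, hv, hT'subT v ℓ ha⟩
  refine ⟨hST, hST', S.card, ?_⟩
  unfold RTree.c
  apply Finset.card_lt_card
  constructor
  · intro a ha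
    rw [mem_filter] at ha ⊢
    exact ⟨ha.1, hsubT a ha.2⟩
  · intro hcon
    have hSA : S ∈ (Finset.univ.powersetCard S.card).filter (fun A => T.IsTransversal A) := by
      rw [mem_filter, mem_powersetCard]
      exact ⟨⟨subset_univ _, rfl⟩, hST⟩
    exact hST' (mem_filter.mp (hcon hSA)).2
end

section
/- Shedding lemma (injection): Let T be a rooted tree with parent function p, let x be a non-root internal node, and let y be a leaf that is a proper descendant of a sibling of x. Let T' be obtained by reassigning every child of x to have parent y (other parents unchanged). Define f(S') = S' if S' meets the root-to-y path in T, and f(S') = (S' \ {x}) ∪ {y} otherwise. Then f maps transversals of T' of size k injectively to transversals of T of size k; consequently c(T,k) ≥ c(T',k) for all k. -/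
open Finset

open RTree

/-! Let `T'` be `T` with the children of `x` hung below `y`. A transversal `S` of `T'` always
contains a `T`-ancestor of `x`, since `x` is a leaf of `T'` whose path is unchanged. If `S` meets
the root-to-`y` path, it is a transversal of `T` as it stands: a leaf below `x` is covered through
`x`, every other leaf keeps its path. Otherwise the only element of `S` on the path to `x` is `x`
itself, and moving it to `y` covers `y` as well as every old descendant of `x`, whose `T'`-path
ran through `y`. The image meets the path to `x` exactly in the first case, which gives a left
inverse. -/

namespace RTree

variable {n : ℕ}

section Ancestor

variable (T : RTree n)

lemma ancestor_refl (v : Fin n) : T.Ancestor v v := ⟨0, rfl⟩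

lemma ancestor_parent (v : Fin n) : T.Ancestor (T.parent v) v := ⟨1, rfl⟩

variable {T}

lemma Ancestor.trans {u v w : Fin n} (huv : T.Ancestor u v) (hvw : T.Ancestor v w) :
    T.Ancestor u w := by
  obtain ⟨i, hi⟩ := huv
  obtain ⟨k, hk⟩ := hvw
  exact ⟨i + k, by rw [Function.iterate_add_apply, hk, hi]⟩

lemma Ancestor.ancestor_parent_of_ne {u v : Fin n} (h : T.Ancestor u v) (hne : u ≠ v) :
    T.Ancestor u (T.parent v) := by
  obtain ⟨_ | k, hk⟩ := h
  · exact absurd hk.symm hne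
  · exact ⟨k, by rwa [← Function.iterate_succ_apply]⟩

lemma Ancestor.total {a b w : Fin n} (ha : T.Ancestor a w) (hb : T.Ancestor b w) :
    T.Ancestor a b ∨ T.Ancestor b a := by
  obtain ⟨i, hi⟩ := ha
  obtain ⟨j, hj⟩ := hb
  rcases le_total i j with h | h
  · exact Or.inr ⟨j - i, by rw [← hi, ← hj, ← Function.iterate_add_apply, Nat.sub_add_cancel h]⟩
  · exact Or.inl ⟨i - j, by rw [← hi, ← hj, ← Function.iterate_add_apply, Nat.sub_add_cancel h]⟩

lemma eq_root_of_iterate_eq_self {v : Fin n} {m : ℕ} (hm : 0 < m) (h : T.parent^[m] v = v) :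
    v = T.root := by
  obtain ⟨k, hk⟩ := T.reaches_root v
  have hper : Function.IsPeriodicPt T.parent m v := h
  calc v = T.parent^[m * k] v := (hper.mul_const k).eq.symm
    _ = T.parent^[m * k - k] (T.parent^[k] v) := by
      rw [← Function.iterate_add_apply, Nat.sub_add_cancel (Nat.le_mul_of_pos_left k hm)]
    _ = T.root := by rw [hk, Function.iterate_fixed T.parent_root]

lemma eq_root_of_ancestor_parent {v : Fin n} (h : T.Ancestor v (T.parent v)) : v = T.root := by
  obtain ⟨k, hk⟩ := h
  exact eq_root_of_iterate_eq_self k.succ_pos hk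

lemma eq_of_isLeaf_of_ancestor {v w : Fin n} (hv : T.IsLeaf v) (h : T.Ancestor v w) : w = v := by
  obtain ⟨k, hk⟩ := h
  induction k with
  | zero => exact hk
  | succ k ih =>
    rw [Function.iterate_succ_apply'] at hk
    by_cases hroot : T.parent^[k] w = T.root
    · rw [hroot, T.parent_root] at hk
      exact ih (hroot.trans hk)
    · exact absurd ⟨_, hroot, hk⟩ hv

lemma not_ancestor_of_parent_eq {s x : Fin n} (hsib : T.parent s = T.parent x) (hs : s ≠ x)
    (hx : x ≠ T.root) : ¬ T.Ancestor x s := fun h =>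
  hx (eq_root_of_ancestor_parent (hsib ▸ h.ancestor_parent_of_ne hs.symm))

end Ancestor

section Rehang

variable {T T' : RTree n} {x y : Fin n}

lemma iterate_parent_eq_of_not_ancestor
    (hpar : ∀ z, T'.parent z = if T.parent z = x then y else T.parent z) {w : Fin n}
    (hw : ¬ T.Ancestor x (T.parent w)) (k : ℕ) : T'.parent^[k] w = T.parent^[k] w := by
  induction k generalizing w with
  | zero => rfl
  | succ k ih =>
    rw [Function.iterate_succ_apply, Function.iterate_succ_apply, hpar,
      if_neg (show T.parent w ≠ x from fun hx => hw ⟨0, hx⟩)]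
    exact ih fun h => hw (h.trans (T.ancestor_parent _))

lemma ancestor_iff_of_not_ancestor
    (hpar : ∀ z, T'.parent z = if T.parent z = x then y else T.parent z) {v w : Fin n}
    (hw : ¬ T.Ancestor x (T.parent w)) : T'.Ancestor v w ↔ T.Ancestor v w := by
  simp only [Ancestor, iterate_parent_eq_of_not_ancestor hpar hw]

lemma ancestor_or_of_ancestor_rehang
    (hpar : ∀ z, T'.parent z = if T.parent z = x then y else T.parent z) {v w : Fin n}
    (h : T'.Ancestor v w) : T.Ancestor v w ∨ (T.Ancestor x w ∧ T'.Ancestor v y) := by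
  obtain ⟨k, hk⟩ := h
  induction k generalizing w with
  | zero => exact Or.inl ⟨0, hk⟩
  | succ k ih =>
    rw [Function.iterate_succ_apply, hpar] at hk
    split_ifs at hk with hw
    · exact Or.inr ⟨⟨1, hw⟩, ⟨k, hk⟩⟩
    · rcases ih hk with h | ⟨hx, hv⟩
      · exact Or.inl (h.trans (T.ancestor_parent w))
      · exact Or.inr ⟨hx.trans (T.ancestor_parent w), hv⟩

lemma isLeaf_rehang_self (hpar : ∀ z, T'.parent z = if T.parent z = x then y else T.parent z)
    (hyx : y ≠ x) : T'.IsLeaf x := by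
  rintro ⟨u, -, hu⟩
  rw [hpar] at hu
  split_ifs at hu with h
  · exact hyx hu
  · exact h hu

lemma isLeaf_rehang_of_isLeaf (hroot : T'.root = T.root)
    (hpar : ∀ z, T'.parent z = if T.parent z = x then y else T.parent z) {ℓ : Fin n}
    (hℓ : T.IsLeaf ℓ) (hℓy : ℓ ≠ y) : T'.IsLeaf ℓ := by
  rintro ⟨u, hu, hpu⟩
  rw [hpar] at hpu
  split_ifs at hpu
  · exact hℓy hpu.symm
  · exact hℓ ⟨u, hroot ▸ hu, hpu⟩

end Rehang

structure IsShedding (T T' : RTree n) (x y : Fin n) : Prop where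
  root_eq : T'.root = T.root
  parent_eq : ∀ z, T'.parent z = if T.parent z = x then y else T.parent z
  isInternal : T.IsInternal x
  isLeaf : T.IsLeaf y
  not_ancestor : ¬ T.Ancestor x y
  ancestor_parent : T.Ancestor (T.parent x) y

open scoped Classical in
noncomputable def shed (T : RTree n) (x y : Fin n) (S : Finset (Fin n)) : Finset (Fin n) :=
  if ∃ v ∈ S, T.Ancestor v y then S else insert y (S.erase x)

open scoped Classical in
noncomputable def unshed (T : RTree n) (x y : Fin n) (R : Finset (Fin n)) : Finset (Fin n) :=
  if ∃ v ∈ R, T.Ancestor v x then R else insert x (R.erase y)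

namespace IsShedding

variable {T T' : RTree n} {x y : Fin n} {S : Finset (Fin n)}

lemma ne (h : IsShedding T T' x y) : y ≠ x := by
  rintro rfl
  exact h.not_ancestor (T.ancestor_refl y)

lemma ancestor_self_iff (h : IsShedding T T' x y) {v : Fin n} :
    T'.Ancestor v x ↔ T.Ancestor v x :=
  ancestor_iff_of_not_ancestor h.parent_eq fun hx => h.not_ancestor (hx.trans h.ancestor_parent)

lemma ancestor_leaf_iff (h : IsShedding T T' x y) {v : Fin n} :
    T'.Ancestor v y ↔ T.Ancestor v y :=
  ancestor_iff_of_not_ancestor h.parent_eq fun hx =>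
    h.not_ancestor (hx.trans (T.ancestor_parent y))

lemma eq_or_ancestor_leaf (h : IsShedding T T' x y) {v : Fin n} (hv : T.Ancestor v x) :
    v = x ∨ T.Ancestor v y :=
  (eq_or_ne v x).imp_right fun hne => (hv.ancestor_parent_of_ne hne).trans h.ancestor_parent

lemma exists_mem_ancestor (h : IsShedding T T' x y) (hS : T'.IsTransversal S) :
    ∃ u ∈ S, T.Ancestor u x := by
  obtain ⟨u, hu, hux⟩ := hS x (isLeaf_rehang_self h.parent_eq h.ne)
  exact ⟨u, hu, h.ancestor_self_iff.mp hux⟩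

lemma mem_of_not_exists_ancestor (h : IsShedding T T' x y) (hS : T'.IsTransversal S)
    (hA : ¬ ∃ v ∈ S, T.Ancestor v y) : x ∈ S := by
  obtain ⟨u, hu, hux⟩ := h.exists_mem_ancestor hS
  rcases h.eq_or_ancestor_leaf hux with rfl | huy
  · exact hu
  · exact absurd ⟨u, hu, huy⟩ hA

lemma isTransversal_shed (h : IsShedding T T' x y) (hS : T'.IsTransversal S) :
    T.IsTransversal (T.shed x y S) := by
  intro ℓ hℓ
  unfold shed
  split_ifs with hA
  · rcases eq_or_ne ℓ y with rfl | hℓy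
    · exact hA
    obtain ⟨v, hv, hvℓ⟩ := hS ℓ (isLeaf_rehang_of_isLeaf h.root_eq h.parent_eq hℓ hℓy)
    rcases ancestor_or_of_ancestor_rehang h.parent_eq hvℓ with hvℓ | ⟨hxℓ, -⟩
    · exact ⟨v, hv, hvℓ⟩
    · obtain ⟨u, hu, hux⟩ := h.exists_mem_ancestor hS
      exact ⟨u, hu, hux.trans hxℓ⟩
  · rcases eq_or_ne ℓ y with rfl | hℓy
    · exact ⟨ℓ, mem_insert_self _ _, T.ancestor_refl ℓ⟩
    have hℓ' := isLeaf_rehang_of_isLeaf h.root_eq h.parent_eq hℓ hℓy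
    obtain ⟨v, hv, hvℓ⟩ := hS ℓ hℓ'
    have hvx : v ≠ x := by
      rintro rfl
      have hℓv := eq_of_isLeaf_of_ancestor (isLeaf_rehang_self h.parent_eq h.ne) hvℓ
      exact h.isInternal.elim fun u hu => hℓ (hℓv ▸ ⟨u, hu⟩)
    rcases ancestor_or_of_ancestor_rehang h.parent_eq hvℓ with hvℓ | ⟨-, hvy⟩
    · exact ⟨v, mem_insert_of_mem (mem_erase.mpr ⟨hvx, hv⟩), hvℓ⟩
    · exact absurd ⟨v, hv, h.ancestor_leaf_iff.mp hvy⟩ hA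

lemma card_shed (h : IsShedding T T' x y) (hS : T'.IsTransversal S) :
    (T.shed x y S).card = S.card := by
  unfold shed
  split_ifs with hA
  · rfl
  · have hyS : y ∉ S.erase x := fun hy => hA ⟨y, mem_of_mem_erase hy, T.ancestor_refl y⟩
    rw [card_insert_of_notMem hyS, card_erase_add_one (h.mem_of_not_exists_ancestor hS hA)]

lemma unshed_shed (h : IsShedding T T' x y) (hS : T'.IsTransversal S) :
    T.unshed x y (T.shed x y S) = S := by
  unfold shed
  split_ifs with hA
  · exact if_pos (h.exists_mem_ancestor hS)
  · have hyS : y ∉ S.erase x := fun hy => hA ⟨y, mem_of_mem_erase hy, T.ancestor_refl y⟩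
    have hB : ¬ ∃ v ∈ insert y (S.erase x), T.Ancestor v x := by
      rintro ⟨v, hv, hvx⟩
      rcases mem_insert.mp hv with rfl | hv
      · exact h.ne (eq_of_isLeaf_of_ancestor h.isLeaf hvx).symm
      · obtain ⟨hvx', hv⟩ := mem_erase.mp hv
        exact hA ⟨v, hv, (h.eq_or_ancestor_leaf hvx).resolve_left hvx'⟩
    rw [unshed, if_neg hB, erase_insert hyS, insert_erase (h.mem_of_not_exists_ancestor hS hA)]

lemma shed_injOn (h : IsShedding T T' x y) :
    Set.InjOn (T.shed x y) {S | T'.IsTransversal S} :=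
  Set.LeftInvOn.injOn fun _ hS => h.unshed_shed hS

lemma c_le (h : IsShedding T T' x y) (k : ℕ) : T'.c k ≤ T.c k := by
  unfold c
  refine card_le_card_of_injOn (T.shed x y) (fun S hS => ?_)
    (h.shed_injOn.mono fun S hS => ?_)
  · simp only [coe_filter, mem_powersetCard] at hS ⊢
    exact ⟨⟨subset_univ _, (h.card_shed hS.2).trans hS.1.2⟩, h.isTransversal_shed hS.2⟩
  · simp only [coe_filter] at hS
    exact hS.2

end IsShedding

end RTree

open RTree

open scoped Classical in
theorem stmt9_general (n : ℕ) (T T' : RTree n) (x y s : Fin n)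
    (hx : x ≠ T.root) (hxint : T.IsInternal x)
    (hy : T.IsLeaf y)
    (hs : s ≠ x) (hsroot : s ≠ T.root) (hsib : T.parent s = T.parent x)
    (hdesc : T.Ancestor s y)
    (hroot : T'.root = T.root)
    (hpar : ∀ z, T'.parent z = if T.parent z = x then y else T.parent z) :
    (∀ S' : Finset (Fin n), T'.IsTransversal S' →
        T.IsTransversal
          (if ∃ v ∈ S', T.Ancestor v y then S' else insert y (S'.erase x)) ∧
        (if ∃ v ∈ S', T.Ancestor v y then S' else insert y (S'.erase x)).card
          = S'.card) ∧
    (∀ S₁ S₂ : Finset (Fin n), T'.IsTransversal S₁ → T'.IsTransversal S₂ →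
        (if ∃ v ∈ S₁, T.Ancestor v y then S₁ else insert y (S₁.erase x)) =
          (if ∃ v ∈ S₂, T.Ancestor v y then S₂ else insert y (S₂.erase x)) →
        S₁ = S₂) ∧
    ∀ k, T'.c k ≤ T.c k := by
  have hxy : ¬ T.Ancestor x y := fun hxy => (hxy.total hdesc).elim
    (not_ancestor_of_parent_eq hsib hs hx) (not_ancestor_of_parent_eq hsib.symm hs.symm hsroot)
  have hpy : T.Ancestor (T.parent x) y := hsib ▸ (T.ancestor_parent s).trans hdesc
  have h : IsShedding T T' x y := ⟨hroot, hpar, hxint, hy, hxy, hpy⟩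
  exact ⟨fun S hS => ⟨h.isTransversal_shed hS, h.card_shed hS⟩,
    fun S₁ S₂ h₁ h₂ => h.shed_injOn h₁ h₂, h.c_le⟩

open scoped Classical in
theorem stmt9 (n : ℕ) (T T' : RTree n) (x y s : Fin n)
    (hx : x ≠ T.root) (hxint : T.IsInternal x)
    (hy : T.IsLeaf y)
    (hs : s ≠ x) (hsroot : s ≠ T.root) (hsib : T.parent s = T.parent x)
    (hdesc : T.Ancestor s y) (hproper : s ≠ y)
    (hroot : T'.root = T.root)
    (hpar : ∀ z, T'.parent z = if T.parent z = x then y else T.parent z) :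
    (∀ S' : Finset (Fin n), T'.IsTransversal S' →
        T.IsTransversal
          (if ∃ v ∈ S', T.Ancestor v y then S' else insert y (S'.erase x)) ∧
        (if ∃ v ∈ S', T.Ancestor v y then S' else insert y (S'.erase x)).card
          = S'.card) ∧
    (∀ S₁ S₂ : Finset (Fin n), T'.IsTransversal S₁ → T'.IsTransversal S₂ →
        (if ∃ v ∈ S₁, T.Ancestor v y then S₁ else insert y (S₁.erase x)) =
          (if ∃ v ∈ S₂, T.Ancestor v y then S₂ else insert y (S₂.erase x)) →
        S₁ = S₂) ∧
    ∀ k, T'.c k ≤ T.c k :=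
  stmt9_general n T T' x y s hx hxint hy hs hsroot hsib hdesc hroot hpar
end

section
/- Strict shedding lemma: Let T be a rooted tree with parent function p, let x be a non-root internal node, and let y be a leaf that is a proper descendant of a sibling of x. Let T' be obtained by reassigning every child of x to have parent y. Then there exists k such that c(T,k) > c(T',k); in particular, the set consisting of p(y) together with all leaves of T that are not descendants of p(y) is a transversal in T not in the image of the natural injection from transversals of T'. -/
open Finset

open RTree

section Aux
variable {n : ℕ}

lemma iterate_root_aux (T : RTree n) (j : ℕ) : T.parent^[j] T.root = T.root := by
  induction j with
  | zero => rfl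
  | succ j ih => rw [Function.iterate_succ_apply', ih, T.parent_root]

lemma periodic_eq_root_aux (T : RTree n) {w : Fin n} {m : ℕ} (hm : 0 < m)
    (h : T.parent^[m] w = w) : w = T.root := by
  obtain ⟨r, hr⟩ := T.reaches_root w
  have key : ∀ t : ℕ, T.parent^[m * t] w = w := by
    intro t
    induction t with
    | zero => rfl
    | succ t ih => rw [Nat.mul_succ, Function.iterate_add_apply, h, ih]
  have hge : r ≤ m * r := Nat.le_mul_of_pos_left r hm
  calc w = T.parent^[m * r] w := (key r).symm
    _ = T.parent^[m * r - r] (T.parent^[r] w) := by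
        rw [← Function.iterate_add_apply, Nat.sub_add_cancel hge]
    _ = T.root := by rw [hr, iterate_root_aux]

lemma collide_eq_root_aux (T : RTree n) {w : Fin n} {a b : ℕ} (hab : a < b)
    (h : T.parent^[a] w = T.parent^[b] w) : T.parent^[a] w = T.root := by
  apply periodic_eq_root_aux T (m := b - a) (by omega)
  rw [← Function.iterate_add_apply, Nat.sub_add_cancel hab.le, ← h]

lemma descend_root_aux (T : RTree n) {w : Fin n} {a b : ℕ} (hab : a ≤ b)
    (h : T.parent^[a] w = T.root) : T.parent^[b] w = T.root := by
  rw [← Nat.sub_add_cancel hab, Function.iterate_add_apply, h, iterate_root_aux]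

lemma ancestor_trans_aux (T : RTree n) {a b c : Fin n} (h1 : T.Ancestor a b)
    (h2 : T.Ancestor b c) : T.Ancestor a c := by
  obtain ⟨i, hi⟩ := h1; obtain ⟨j, hj⟩ := h2
  exact ⟨i + j, by rw [Function.iterate_add_apply, hj, hi]⟩

end Aux

open scoped Classical in
theorem stmt10 (n : ℕ) (T T' : RTree n) (x y s : Fin n)
    (hx : x ≠ T.root) (hxint : T.IsInternal x)
    (hy : T.IsLeaf y)
    (hs : s ≠ x) (hsroot : s ≠ T.root) (hsib : T.parent s = T.parent x)
    (hdesc : T.Ancestor s y) (hproper : s ≠ y)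
    (hroot : T'.root = T.root)
    (hpar : ∀ z, T'.parent z = if T.parent z = x then y else T.parent z) :
    T.IsTransversal
      (insert (T.parent y) (T.leaves.filter fun ℓ => ¬ T.Ancestor (T.parent y) ℓ)) ∧
    (¬ ∃ S' : Finset (Fin n), T'.IsTransversal S' ∧
        (if ∃ v ∈ S', T.Ancestor v y then S' else insert y (S'.erase x)) =
          insert (T.parent y)
            (T.leaves.filter fun ℓ => ¬ T.Ancestor (T.parent y) ℓ)) ∧
    ∃ k, T'.c k < T.c k := by
  classical
  obtain ⟨k₀, hk₀⟩ := hdesc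
  have hk₀pos : 0 < k₀ := by
    rcases Nat.eq_zero_or_pos k₀ with h | h
    · exfalso; apply hproper; rw [← hk₀, h]; rfl
    · exact h
  have hyroot : y ≠ T.root := by
    intro h
    apply hsroot
    rw [← hk₀, h, iterate_root_aux]
  have hxy : x ≠ y := fun h => hy (h ▸ hxint)
  have pyney : T.parent y ≠ y := by
    intro h
    exact hyroot (periodic_eq_root_aux T (m := 1) one_pos (by simpa using h))
  have hpxps : T.parent x = T.parent^[k₀ + 1] y := by
    rw [Function.iterate_succ_apply', hk₀, hsib]
  -- F1 : x is not an ancestor of y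
  have F1 : ¬ T.Ancestor x y := by
    rintro ⟨a, ha⟩
    have hane : a ≠ k₀ := by
      intro h; apply hs; rw [← hk₀, ← ha, h]
    have h1 : T.parent^[a + 1] y = T.parent^[k₀ + 1] y := by
      rw [Function.iterate_succ_apply', ha, hpxps]
    rcases lt_or_gt_of_ne hane with h | h
    · have hr : T.parent^[a + 1] y = T.root :=
        collide_eq_root_aux T (by omega) h1
      exact hsroot (hk₀ ▸ descend_root_aux T (by omega) hr)
    · have hr : T.parent^[k₀ + 1] y = T.root :=
        collide_eq_root_aux T (by omega) h1.symm
      exact hx (ha ▸ descend_root_aux T (by omega) hr)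
  -- F2 : parent of y is not an ancestor of x
  have F2 : ¬ T.Ancestor (T.parent y) x := by
    rintro ⟨j, hj⟩
    have hse : T.parent^[k₀ - 1 + j] x = s := by
      rw [Function.iterate_add_apply, hj, ← Function.iterate_succ_apply]
      have hkk : (k₀ - 1).succ = k₀ := by omega
      rw [hkk, hk₀]
    rcases Nat.eq_zero_or_pos (k₀ - 1 + j) with h | h
    · apply hs; rw [← hse, h]; rfl
    · have h1 : T.parent^[1] x = T.parent^[k₀ - 1 + j + 1] x := by
        rw [Function.iterate_one]
        conv_rhs => rw [Function.iterate_succ_apply', hse, hsib]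
      have hr : T.parent^[1] x = T.root := collide_eq_root_aux T (by omega) h1
      exact hsroot (hse ▸ descend_root_aux T (by omega) hr)
  -- F3 : strict ancestors of x are ancestors of y
  have F3 : ∀ j, 1 ≤ j → T.parent^[j] x = T.parent^[j + k₀] y := by
    intro j hj
    have : T.parent^[j] x = T.parent^[j - 1] (T.parent^[1] x) := by
      rw [← Function.iterate_add_apply]
      congr 1
      omega
    rw [this, Function.iterate_one, hpxps, ← Function.iterate_add_apply]
    congr 1
    omega
  have F3' : ∀ j, 1 ≤ j → T.Ancestor (T.parent^[j] x) y := fun j hj =>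
    ⟨j + k₀, (F3 j hj).symm⟩
  -- F10 : strict ancestors of x are internal
  have F10 : ∀ j, 1 ≤ j → T.IsInternal (T.parent^[j] x) := by
    intro j hj
    by_cases h : T.parent^[j - 1] x = T.root
    · have hjr : T.parent^[j] x = T.root := descend_root_aux T (by omega) h
      rw [hjr]
      obtain ⟨r, hr⟩ := T.reaches_root x
      have hex : ∃ r, T.parent^[r] x = T.root := ⟨r, hr⟩
      have hspec := Nat.find_spec hex
      have hrpos : 0 < Nat.find hex := by
        rcases Nat.eq_zero_or_pos (Nat.find hex) with h0 | h0
        · exact absurd (by rw [← hspec, h0]; rfl) hx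
        · exact h0
      have hstep : T.parent^[Nat.find hex - 1 + 1] x = T.root := by
        rw [show Nat.find hex - 1 + 1 = Nat.find hex from by omega]; exact hspec
      refine ⟨T.parent^[Nat.find hex - 1] x, Nat.find_min hex (by omega), ?_⟩
      exact (Function.iterate_succ_apply' T.parent (Nat.find hex - 1) x).symm.trans hstep
    · refine ⟨T.parent^[j - 1] x, h, ?_⟩
      have hj1 : j - 1 + 1 = j := by omega
      calc T.parent (T.parent^[j - 1] x) = T.parent^[j - 1 + 1] x :=
            (Function.iterate_succ_apply' T.parent (j - 1) x).symm
        _ = T.parent^[j] x := by rw [hj1]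
  -- F4 : T' iterates from x agree with T
  have F4 : ∀ j, T'.parent^[j] x = T.parent^[j] x := by
    intro j
    induction j with
    | zero => rfl
    | succ j ih =>
      have hne : T.parent (T.parent^[j] x) ≠ x := by
        intro h
        have hper : T.parent^[j + 1] x = x := by rw [Function.iterate_succ_apply', h]
        exact hx (periodic_eq_root_aux T (by omega) hper)
      rw [Function.iterate_succ_apply', Function.iterate_succ_apply', ih, hpar,
        if_neg hne]
  have F5 : ∀ w, T'.Ancestor w x → T.Ancestor w x := by
    rintro w ⟨j, hj⟩
    exact ⟨j, by rw [← F4 j, hj]⟩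
  -- F6 : T' iterates agree with T outside x's subtree
  have F6 : ∀ v, ¬ T.Ancestor x v → ∀ j, T'.parent^[j] v = T.parent^[j] v := by
    intro v hv j
    induction j with
    | zero => rfl
    | succ j ih =>
      have hne : T.parent (T.parent^[j] v) ≠ x := by
        intro h
        exact hv ⟨j + 1, by rw [Function.iterate_succ_apply', h]⟩
      rw [Function.iterate_succ_apply', Function.iterate_succ_apply', ih, hpar,
        if_neg hne]
  have F6' : ∀ v w, ¬ T.Ancestor x v → T'.Ancestor w v → T.Ancestor w v := by
    rintro v w hv ⟨j, hj⟩
    exact ⟨j, by rw [← F6 v hv j, hj]⟩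
  -- x is a T'-leaf
  have hxleaf' : T'.IsLeaf x := by
    rintro ⟨u, hu, hpu⟩
    rw [hpar u] at hpu
    split_ifs at hpu with h
    · exact hxy hpu.symm
    · exact h hpu
  -- T-leaves other than y are T'-leaves
  have hleaf' : ∀ ℓ, T.IsLeaf ℓ → ℓ ≠ y → T'.IsLeaf ℓ := by
    rintro ℓ hℓ hne ⟨u, hu, hpu⟩
    rw [hpar u] at hpu
    rw [hroot] at hu
    split_ifs at hpu with h
    · exact hne hpu.symm
    · exact hℓ ⟨u, hu, hpu⟩
  -- F9 : T'-ancestors of a strict T-descendant of x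
  have F9 : ∀ ℓ w, T.Ancestor x ℓ → ℓ ≠ x → T'.Ancestor w ℓ →
      (w ≠ x ∧ T.Ancestor w ℓ) ∨ T.Ancestor w y := by
    intro ℓ w hxℓ hℓx hw'
    have hex : ∃ m, T.parent^[m] ℓ = x := hxℓ
    have hm : T.parent^[Nat.find hex] ℓ = x := Nat.find_spec hex
    set m := Nat.find hex with hmdef
    have hmin : ∀ j, j < m → T.parent^[j] ℓ ≠ x := fun j hj => Nat.find_min hex hj
    have hmpos : 0 < m := by
      rcases Nat.eq_zero_or_pos m with h | h
      · exfalso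
        apply hℓx
        rw [← hm, h]
        rfl
      · exact h
    have C1 : ∀ j, j < m → T'.parent^[j] ℓ = T.parent^[j] ℓ := by
      intro j
      induction j with
      | zero => intro _; rfl
      | succ j ih =>
        intro hj
        have hne : T.parent (T.parent^[j] ℓ) ≠ x := by
          have := hmin (j + 1) hj
          rwa [Function.iterate_succ_apply'] at this
        rw [Function.iterate_succ_apply', Function.iterate_succ_apply',
          ih (by omega), hpar, if_neg hne]
    have C2 : T'.parent^[m] ℓ = y := by
      obtain ⟨m', hm'⟩ : ∃ m', m = m' + 1 := ⟨m - 1, by omega⟩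
      have hm2 : T.parent (T.parent^[m'] ℓ) = x := by
        have := hm
        rwa [hm', Function.iterate_succ_apply'] at this
      rw [hm', Function.iterate_succ_apply', C1 m' (by omega), hpar, if_pos hm2]
    have C3 : ∀ r, T'.parent^[r + m] ℓ = T.parent^[r] y := by
      intro r
      rw [Function.iterate_add_apply, C2, F6 y F1 r]
    obtain ⟨j, hj⟩ := hw'
    rcases lt_or_ge j m with h | h
    · rw [C1 j h] at hj
      exact Or.inl ⟨hj ▸ hmin j h, ⟨j, hj⟩⟩
    · right
      have hje : j = (j - m) + m := by omega
      rw [hje, C3] at hj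
      exact ⟨j - m, hj⟩
  -- Part 1 : the special set is a transversal of T
  have hStrans : T.IsTransversal
      (insert (T.parent y) (T.leaves.filter fun ℓ => ¬ T.Ancestor (T.parent y) ℓ)) := by
    intro ℓ hℓ
    by_cases h : T.Ancestor (T.parent y) ℓ
    · exact ⟨T.parent y, mem_insert_self _ _, h⟩
    · refine ⟨ℓ, mem_insert_of_mem (mem_filter.mpr ⟨?_, h⟩), ⟨0, rfl⟩⟩
      simp [RTree.leaves, hℓ]
  -- Part 2
  have hnot : ¬ ∃ S' : Finset (Fin n), T'.IsTransversal S' ∧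
      (if ∃ v ∈ S', T.Ancestor v y then S' else insert y (S'.erase x)) =
        insert (T.parent y)
          (T.leaves.filter fun ℓ => ¬ T.Ancestor (T.parent y) ℓ) := by
    rintro ⟨S', hS', heq⟩
    by_cases hcond : ∃ v ∈ S', T.Ancestor v y
    · rw [if_pos hcond] at heq
      obtain ⟨w, hwS, hw⟩ := hS' x hxleaf'
      obtain ⟨j, hj⟩ := F5 w hw
      rw [heq] at hwS
      rcases mem_insert.mp hwS with h | h
      · exact F2 ⟨j, h ▸ hj⟩
      · have hwleaf : T.IsLeaf w := by
          have := (mem_filter.mp h).1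
          simpa [RTree.leaves] using this
        rcases Nat.eq_zero_or_pos j with h0 | h0
        · apply hwleaf
          rw [← hj, h0]
          exact hxint
        · exact hwleaf (hj ▸ F10 j h0)
    · rw [if_neg hcond] at heq
      have hyS : y ∈ insert (T.parent y)
          (T.leaves.filter fun ℓ => ¬ T.Ancestor (T.parent y) ℓ) := by
        rw [← heq]; exact mem_insert_self _ _
      rcases mem_insert.mp hyS with h | h
      · exact pyney h.symm
      · exact (mem_filter.mp h).2 ⟨1, by simp⟩
  refine ⟨hStrans, hnot, ?_⟩
  -- Part 3 : counting
  set F : Finset (Fin n) → Finset (Fin n) :=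
    fun S' => if ∃ v ∈ S', T.Ancestor v y then S' else insert y (S'.erase x) with hF
  have key1 : ∀ S', T'.IsTransversal S' → ¬ (∃ v ∈ S', T.Ancestor v y) →
      x ∈ S' ∧ y ∉ S' := by
    intro S' hS' hcond
    constructor
    · obtain ⟨w, hwS, hw⟩ := hS' x hxleaf'
      obtain ⟨j, hj⟩ := F5 w hw
      rcases Nat.eq_zero_or_pos j with h0 | h0
      · have hxw : x = w := by rw [← hj, h0]; rfl
        rwa [hxw]
      · exact absurd ⟨w, hwS, hj ▸ F3' j h0⟩ hcond
    · intro hyS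
      exact hcond ⟨y, hyS, ⟨0, rfl⟩⟩
  have key2 : ∀ S', T'.IsTransversal S' → T.IsTransversal (F S') := by
    intro S' hS' ℓ hℓ
    by_cases hcond : ∃ v ∈ S', T.Ancestor v y
    · rw [hF]
      simp only
      rw [if_pos hcond]
      by_cases hxℓ : T.Ancestor x ℓ
      · obtain ⟨w, hwS, hw⟩ := hS' x hxleaf'
        exact ⟨w, hwS, ancestor_trans_aux T (F5 w hw) hxℓ⟩
      · by_cases hℓy : ℓ = y
        · obtain ⟨v, hv, hvy⟩ := hcond
          exact ⟨v, hv, hℓy ▸ hvy⟩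
        · obtain ⟨v, hv, hva⟩ := hS' ℓ (hleaf' ℓ hℓ hℓy)
          exact ⟨v, hv, F6' ℓ v hxℓ hva⟩
    · rw [hF]
      simp only
      rw [if_neg hcond]
      by_cases hℓy : ℓ = y
      · exact ⟨y, mem_insert_self _ _, ⟨0, hℓy ▸ rfl⟩⟩
      · by_cases hxℓ : T.Ancestor x ℓ
        · have hℓx : ℓ ≠ x := fun h => hℓ (h ▸ hxint)
          obtain ⟨v, hv, hva⟩ := hS' ℓ (hleaf' ℓ hℓ hℓy)
          rcases F9 ℓ v hxℓ hℓx hva with ⟨hvx, hvℓ⟩ | hvy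
          · exact ⟨v, mem_insert_of_mem (mem_erase.mpr ⟨hvx, hv⟩), hvℓ⟩
          · exact absurd ⟨v, hv, hvy⟩ hcond
        · obtain ⟨v, hv, hva⟩ := hS' ℓ (hleaf' ℓ hℓ hℓy)
          have hvℓ : T.Ancestor v ℓ := F6' ℓ v hxℓ hva
          have hvx : v ≠ x := fun h => hxℓ (h ▸ hvℓ)
          exact ⟨v, mem_insert_of_mem (mem_erase.mpr ⟨hvx, hv⟩), hvℓ⟩
  have key3 : ∀ S', T'.IsTransversal S' → (F S').card = S'.card := by
    intro S' hS'
    by_cases hcond : ∃ v ∈ S', T.Ancestor v y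
    · rw [hF]; simp only; rw [if_pos hcond]
    · obtain ⟨hxS, hyS⟩ := key1 S' hS' hcond
      rw [hF]; simp only; rw [if_neg hcond]
      rw [card_insert_of_notMem (fun h => hyS (mem_of_mem_erase h)),
        card_erase_of_mem hxS]
      have : 0 < S'.card := card_pos.mpr ⟨x, hxS⟩
      omega
  have mixed : ∀ S₁ S₂ : Finset (Fin n), T'.IsTransversal S₂ →
      ¬ (∃ v ∈ S₁, T.Ancestor v y) → S₂ = insert y (S₁.erase x) → False := by
    intro S₁ S₂ h₂ hc₁ heq
    obtain ⟨w, hwS, hw⟩ := h₂ x hxleaf'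
    obtain ⟨j, hj⟩ := F5 w hw
    rw [heq] at hwS
    rcases Nat.eq_zero_or_pos j with h0 | h0
    · have hxw : x = w := by rw [← hj, h0]; rfl
      rw [← hxw] at hwS
      rcases mem_insert.mp hwS with h | h
      · exact hxy h
      · exact (notMem_erase x S₁) h
    · have hwy : T.Ancestor w y := hj ▸ F3' j h0
      rcases mem_insert.mp hwS with h | h
      · exact hy (h ▸ hj ▸ F10 j h0)
      · exact hc₁ ⟨w, mem_of_mem_erase h, hwy⟩
  have key4 : ∀ S₁ S₂ : Finset (Fin n), T'.IsTransversal S₁ → T'.IsTransversal S₂ →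
      F S₁ = F S₂ → S₁ = S₂ := by
    intro S₁ S₂ h₁ h₂ heq
    rw [hF] at heq
    simp only at heq
    by_cases c₁ : ∃ v ∈ S₁, T.Ancestor v y <;>
      by_cases c₂ : ∃ v ∈ S₂, T.Ancestor v y
    · rwa [if_pos c₁, if_pos c₂] at heq
    · rw [if_pos c₁, if_neg c₂] at heq
      exact absurd heq (by intro h; exact mixed S₂ S₁ h₁ c₂ h)
    · rw [if_neg c₁, if_pos c₂] at heq
      exact absurd heq.symm (by intro h; exact mixed S₁ S₂ h₂ c₁ h)
    · rw [if_neg c₁, if_neg c₂] at heq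
      obtain ⟨hx₁, hy₁⟩ := key1 S₁ h₁ c₁
      obtain ⟨hx₂, hy₂⟩ := key1 S₂ h₂ c₂
      have he : S₁.erase x = S₂.erase x := by
        have h1 : y ∉ S₁.erase x := fun h => hy₁ (mem_of_mem_erase h)
        have h2 : y ∉ S₂.erase x := fun h => hy₂ (mem_of_mem_erase h)
        have := congrArg (Finset.erase · y) heq
        simpa [Finset.erase_insert h1, Finset.erase_insert h2] using this
      ext z
      by_cases hz : z = x
      · subst hz; simp [hx₁, hx₂]
      · constructor
        · intro h; exact mem_of_mem_erase (he ▸ mem_erase.mpr ⟨hz, h⟩)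
        · intro h; exact mem_of_mem_erase (he ▸ mem_erase.mpr ⟨hz, h⟩)
  -- assemble the counting argument
  set S : Finset (Fin n) :=
    insert (T.parent y) (T.leaves.filter fun ℓ => ¬ T.Ancestor (T.parent y) ℓ) with hSdef
  refine ⟨S.card, ?_⟩
  have hA : T'.c S.card =
      ((Finset.univ.powersetCard S.card).filter (fun S' => T'.IsTransversal S')).card := rfl
  have hB : T.c S.card =
      ((Finset.univ.powersetCard S.card).filter (fun S' => T.IsTransversal S')).card := rfl
  rw [hA, hB]
  set A := (Finset.univ.powersetCard S.card).filter (fun S' => T'.IsTransversal S') with hAdef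
  set B := (Finset.univ.powersetCard S.card).filter (fun S' => T.IsTransversal S') with hBdef
  have himg : A.image F ⊆ B := by
    intro t ht
    obtain ⟨S', hS', rfl⟩ := mem_image.mp ht
    rw [hAdef, mem_filter, mem_powersetCard] at hS'
    rw [hBdef, mem_filter, mem_powersetCard]
    exact ⟨⟨subset_univ _, by rw [key3 S' hS'.2]; exact hS'.1.2⟩, key2 S' hS'.2⟩
  have hSmem : S ∈ B := by
    rw [hBdef, mem_filter, mem_powersetCard]
    exact ⟨⟨subset_univ _, rfl⟩, hStrans⟩
  have hSnot : S ∉ A.image F := by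
    intro h
    obtain ⟨S', hS', hFS⟩ := mem_image.mp h
    rw [hAdef, mem_filter] at hS'
    exact hnot ⟨S', hS'.2, hFS⟩
  have hss : A.image F ⊂ B := (Finset.ssubset_iff_of_subset himg).mpr ⟨S, hSmem, hSnot⟩
  have hinj : Set.InjOn F ↑A := by
    intro S₁ h₁ S₂ h₂ h
    rw [Finset.mem_coe, hAdef, mem_filter] at h₁ h₂
    exact key4 S₁ S₂ h₁.2 h₂.2 h
  calc A.card = (A.image F).card := (Finset.card_image_of_injOn hinj).symm
    _ < B.card := Finset.card_lt_card hss
end
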